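/- Let n ≥ 2 and m ≥ 2 be integers, let L, μ_x, μ_y, R_x, R_y be positive reals with μ_x ≥ μ_y, κ_x = L/μ_x ≥ 2 and κ_y = L/μ_y ≥ 2. Set α = √( (κ_x − 2/κ_x) κ_y / n² + 1 ), q = (α − 1)/(α + 1), ζ = √(2/(α + 1)), ξ = √(L² − 2μ_x²)/(2n), β = min{ 2 n R_x √(α/(κ_x² − 2)), (2 n R_x/(α + 1)) √(2α/(κ_x² − 2)), √(2α) R_y/(α − 1) }, and define f : ℝ^m × ℝ^m → ℝ by f(x,y) = ξ ( Σ_{l=1}^{m−1} y_l (x_l − x_{l+1}) + ζ y_m x_m ) + (μ_x/2)‖x‖² − (μ_y/2)‖y‖² − β ξ x_1. Let x* = ( 2 n β μ_y / ((1 − q) √(L² − 2μ_x²)) ) · (q, q², …, q^m) and y* = β · (q, q², …, q^{m−1}, √((α+1)/2) q^m). Then (x*, y*) is a saddle point of f, i.e., f(x*, y) ≤ f(x*, y*) ≤ f(x, y*) for all x, y ∈ ℝ^m, and moreover ‖x*‖ ≤ R_x and ‖y*‖ ≤ R_y. -/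
import Mathlib


open scoped BigOperators

set_option maxHeartbeats 1000000

private lemma fSCSC_aux_concave (μ B a : ℝ) (hμ : 0 < μ) :
    μ * B * a - (μ/2) * a^2 ≤ μ * B * B - (μ/2) * B^2 := by
  nlinarith [mul_nonneg hμ.le (sq_nonneg (a - B))]

private lemma fSCSC_aux_convex (μ b x : ℝ) (hμ : 0 < μ) :
    -(μ * b) * b + (μ/2) * b^2 ≤ -(μ * b) * x + (μ/2) * x^2 := by
  nlinarith [mul_nonneg hμ.le (sq_nonneg (x - b))]

/-- The strongly-convex–strongly-concave hard instance `f_SCSC` has the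
explicitly given pair `(x*, y*)` as a saddle point, with `‖x*‖ ≤ R_x` and `‖y*‖ ≤ R_y`. -/
theorem fSCSC_saddle_point
    (n m : ℕ) (hn : 2 ≤ n) (hm : 2 ≤ m)
    (L μx μy Rx Ry : ℝ)
    (hL : 0 < L) (hμx : 0 < μx) (hμy : 0 < μy) (hRx : 0 < Rx) (hRy : 0 < Ry)
    (hμ : μy ≤ μx)
    (kx ky : ℝ) (hkx : kx = L / μx) (hky : ky = L / μy)
    (hkx2 : 2 ≤ kx) (hky2 : 2 ≤ ky)
    (α q ζ ξ β : ℝ)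
    (hα : α = Real.sqrt ((kx - 2 / kx) * ky / (n : ℝ) ^ 2 + 1))
    (hq : q = (α - 1) / (α + 1))
    (hζ : ζ = Real.sqrt (2 / (α + 1)))
    (hξ : ξ = Real.sqrt (L ^ 2 - 2 * μx ^ 2) / (2 * n))
    (hβ : β = min (2 * n * Rx * Real.sqrt (α / (kx ^ 2 - 2)))
            (min ((2 * n * Rx / (α + 1)) * Real.sqrt (2 * α / (kx ^ 2 - 2)))
              (Real.sqrt (2 * α) * Ry / (α - 1))))
    (f : EuclideanSpace ℝ (Fin m) → EuclideanSpace ℝ (Fin m) → ℝ)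
    (hf : ∀ x y, f x y =
      ξ * ((∑ l : Fin (m - 1),
              y (Fin.castLE (by omega) l) *
                (x (Fin.castLE (by omega) l) - x (Fin.cast (by omega : m - 1 + 1 = m) l.succ)))
            + ζ * y ⟨m - 1, by omega⟩ * x ⟨m - 1, by omega⟩)
        + (μx / 2) * ‖x‖ ^ 2 - (μy / 2) * ‖y‖ ^ 2 - β * ξ * x ⟨0, by omega⟩)
    (xs ys : EuclideanSpace ℝ (Fin m))
    (hxs : ∀ i : Fin m,
      xs i = (2 * n * β * μy / ((1 - q) * Real.sqrt (L ^ 2 - 2 * μx ^ 2))) * q ^ ((i : ℕ) + 1))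
    (hys : ∀ i : Fin m, (i : ℕ) + 1 ≤ m - 1 → ys i = β * q ^ ((i : ℕ) + 1))
    (hysm : ys ⟨m - 1, by omega⟩ = β * Real.sqrt ((α + 1) / 2) * q ^ m) :
    (∀ y', f xs y' ≤ f xs ys) ∧
    (∀ x', f xs ys ≤ f x' ys) ∧
    ‖xs‖ ≤ Rx ∧ ‖ys‖ ≤ Ry := by
  obtain ⟨k, rfl⟩ : ∃ k, m = k + 2 := ⟨m - 2, by omega⟩
  -- ## basic positivity and scalar setup
  have hn0 : (0:ℝ) < n := by positivity
  have hLμ : 2 * μx ≤ L := by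
    rw [hkx] at hkx2
    calc 2 * μx ≤ (L/μx) * μx := by nlinarith
    _ = L := by field_simp
  have hS2pos : 0 < L^2 - 2*μx^2 := by nlinarith
  set S : ℝ := Real.sqrt (L ^ 2 - 2 * μx ^ 2) with hSdef
  have hS2 : S^2 = L^2 - 2*μx^2 := Real.sq_sqrt (by linarith)
  have hSpos : 0 < S := Real.sqrt_pos.mpr hS2pos
  have hkxpos : (0:ℝ) < kx := by linarith
  have hkypos : (0:ℝ) < ky := by linarith
  have hApos : 0 < (kx - 2 / kx) * ky / (n : ℝ) ^ 2 := by
    have h1 : 2 / kx ≤ 1 := by rw [div_le_one hkxpos]; linarith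
    have h2 : 0 < kx - 2 / kx := by linarith
    positivity
  have hα2 : α^2 = (kx - 2 / kx) * ky / (n : ℝ) ^ 2 + 1 := by
    rw [hα]; exact Real.sq_sqrt (by linarith)
  have hα1 : 1 < α := by
    have h1 : Real.sqrt 1 < Real.sqrt ((kx - 2 / kx) * ky / (n : ℝ) ^ 2 + 1) :=
      Real.sqrt_lt_sqrt (by norm_num) (by linarith)
    rw [hα]; simpa using h1
  have hα1' : (0:ℝ) < α - 1 := by linarith
  have hα1'' : (0:ℝ) < α + 1 := by linarith
  have hα21 : 0 < α^2 - 1 := by rw [hα2]; linarith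
  have hKey : (α^2 - 1) * ((n:ℝ)^2 * (μx*μy)) = L^2 - 2*μx^2 := by
    rw [hα2, hkx, hky]
    field_simp
    ring
  have hS2' : S^2 = (α^2-1)*((n:ℝ)^2*(μx*μy)) := by rw [hS2, ← hKey]
  have hq0 : 0 < q := by rw [hq]; positivity
  have hq1 : q < 1 := by rw [hq, div_lt_one hα1'']; linarith
  have h1q : 0 < 1 - q := by linarith
  have h1q2 : 0 < 1 - q^2 := by
    have h := pow_lt_one₀ hq0.le hq1 (two_ne_zero)
    linarith
  have hqα : q * (α + 1) = α - 1 := by rw [hq]; field_simp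
  have hξpos : 0 < ξ := by rw [hξ]; positivity
  have hξS : ξ * (2*n) = S := by rw [hξ]; field_simp
  have hmain : S^2 * (1-q)^2 = 4 * ((n:ℝ)^2*(μx*μy)) * q := by
    rw [hS2, ← hKey, hq]
    field_simp
    ring
  have hkx2' : 0 < kx^2 - 2 := by nlinarith
  have hβpos : 0 < β := by
    have b1 : 0 < 2 * n * Rx * Real.sqrt (α / (kx ^ 2 - 2)) := by positivity
    have b2 : 0 < (2 * n * Rx / (α + 1)) * Real.sqrt (2 * α / (kx ^ 2 - 2)) := by positivity
    have b3 : 0 < Real.sqrt (2 * α) * Ry / (α - 1) := by positivity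
    rw [hβ]; exact lt_min b1 (lt_min b2 b3)
  set c : ℝ := 2 * n * β * μy / ((1 - q) * S) with hcdef
  have hcpos : 0 < c := by rw [hcdef]; positivity
  have hxs' : ∀ i : Fin (k+2), xs i = c * q ^ ((i:ℕ)+1) := by
    intro i; rw [hxs i]
  have hcS : c * ((1-q) * S) = 2 * n * β * μy := by
    rw [hcdef]; field_simp
  have K1 : ξ * c * (1 - q) = μy * β := by
    apply mul_right_cancel₀ (b := 2*(n:ℝ)) (by positivity)
    linear_combination (c*(1-q)) * hξS + hcS
  have K3 : ξ * β * (1 - q) = μx * (c * q) := by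
    apply mul_right_cancel₀ (b := (2*(n:ℝ))*((1-q)*S)) (by positivity)
    linear_combination (β*(1-q)^2*S) * hξS + (-(2*(n:ℝ))*μx*q) * hcS + β * hmain
  set w : ℝ := Real.sqrt ((α + 1) / 2) with hwdef
  have hw2 : w^2 = (α+1)/2 := Real.sq_sqrt (by positivity)
  have hwpos : 0 < w := Real.sqrt_pos.mpr (by positivity)
  have hζw : ζ * w = 1 := by
    rw [hζ, hwdef, ← Real.sqrt_mul (by positivity)]
    rw [show 2 / (α + 1) * ((α + 1) / 2) = 1 by field_simp]
    exact Real.sqrt_one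
  have hζval : ζ = (1 - q) * w := by
    have h1 : (0:ℝ) ≤ ζ := by rw [hζ]; positivity
    have h2 : (0:ℝ) ≤ (1-q)*w := by positivity
    have h3 : ζ^2 = ((1-q)*w)^2 := by
      rw [hζ, Real.sq_sqrt (by positivity), mul_pow, hw2, hq]
      field_simp
      ring
    rw [← Real.sqrt_sq h1, ← Real.sqrt_sq h2, h3]
  have K4 : ξ * ζ * c = μy * (β * w) := by
    rw [hζval]
    linear_combination w * K1
  -- ## coordinate values
  have hysm' : ys (Fin.last (k+1)) = β * w * q ^ (k + 2) := hysm
  have hysc : ∀ l : Fin (k+1), ys l.castSucc = β * q ^ ((l:ℕ)+1) := by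
    intro l
    have := hys l.castSucc (by simp; omega)
    simpa using this
  have hys0 : ys (0 : Fin (k+2)) = β * q := by
    have := hys 0 (by simp)
    simpa using this
  have hxs0 : xs (0 : Fin (k+2)) = c * q := by simpa using hxs' 0
  -- ## stationarity claims
  have ClaimY : ∀ l : Fin (k+1), ξ * (xs l.castSucc - xs l.succ) = μy * ys l.castSucc := by
    intro l
    rw [hxs' l.castSucc, hxs' l.succ, hysc l]
    simp only [Fin.coe_castSucc, Fin.val_succ]
    linear_combination (q^((l:ℕ)+1)) * K1
  have ClaimYlast : ξ * ζ * xs (Fin.last (k+1)) = μy * ys (Fin.last (k+1)) := by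
    rw [hxs' (Fin.last (k+1)), hysm']
    simp only [Fin.val_last]
    linear_combination (q^(k+2)) * K4
  have ClaimX0 : ξ * ys (0 : Fin (k+2)) - β * ξ + μx * xs (0 : Fin (k+2)) = 0 := by
    rw [hxs0, hys0]
    linear_combination (-1 : ℝ) * K3
  have ClaimXint : ∀ j : Fin k, ξ * (ys (j.succ.castSucc) - ys (j.castSucc.castSucc))
      + μx * xs (j.succ.castSucc) = 0 := by
    intro j
    rw [hxs', hysc, hysc]
    simp only [Fin.coe_castSucc, Fin.val_succ]
    linear_combination (-(q^((j:ℕ)+1))) * K3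
  have ClaimXlast : ξ * (ζ * ys (Fin.last (k+1)) - ys ((Fin.last k).castSucc))
      + μx * xs (Fin.last (k+1)) = 0 := by
    rw [hxs', hysc, hysm']
    simp only [Fin.val_last]
    linear_combination (ξ*β*q^(k+2))*hζw + (-(q:ℝ)^(k+1)) * K3
  -- ## norms as coordinate sums
  have hnormsq : ∀ z : EuclideanSpace ℝ (Fin (k+2)), ‖z‖^2 = ∑ i, (z i)^2 := by
    intro z
    rw [EuclideanSpace.norm_eq, Real.sq_sqrt (by positivity)]
    simp [Real.norm_eq_abs, sq_abs]
  have hf' : ∀ x y : EuclideanSpace ℝ (Fin (k+2)), f x y =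
      ξ * ((∑ l : Fin (k+1), y l.castSucc * (x l.castSucc - x l.succ))
          + ζ * y (Fin.last (k+1)) * x (Fin.last (k+1)))
        + (μx/2) * ∑ i, (x i)^2 - (μy/2) * ∑ i, (y i)^2 - β * ξ * x (0 : Fin (k+2)) := by
    intro x y
    rw [hf x y, hnormsq x, hnormsq y]
    rfl
  -- ## y-direction expansion and inequality
  have expandY : ∀ z : EuclideanSpace ℝ (Fin (k+2)),
      ξ * ((∑ l : Fin (k+1), z l.castSucc * (xs l.castSucc - xs l.succ))
          + ζ * z (Fin.last (k+1)) * xs (Fin.last (k+1)))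
        - (μy/2) * ∑ i, (z i)^2
      = (∑ l : Fin (k+1), (μy * ys l.castSucc * z l.castSucc - (μy/2) * (z l.castSucc)^2))
        + (μy * ys (Fin.last (k+1)) * z (Fin.last (k+1))
            - (μy/2) * (z (Fin.last (k+1)))^2) := by
    intro z
    have s1 : (∑ l : Fin (k+1), (μy * ys l.castSucc * z l.castSucc - (μy/2) * (z l.castSucc)^2))
        = ξ * (∑ l : Fin (k+1), z l.castSucc * (xs l.castSucc - xs l.succ))
          - (μy/2) * ∑ l : Fin (k+1), (z l.castSucc)^2 := by
      rw [Finset.mul_sum, Finset.mul_sum, ← Finset.sum_sub_distrib]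
      refine Finset.sum_congr rfl (fun l _ => ?_)
      rw [← ClaimY l]; ring
    rw [s1, ← ClaimYlast, Fin.sum_univ_castSucc (f := fun i : Fin (k+2) => (z i)^2)]
    ring
  have partY : ∀ y' : EuclideanSpace ℝ (Fin (k+2)),
      ξ * ((∑ l : Fin (k+1), y' l.castSucc * (xs l.castSucc - xs l.succ))
          + ζ * y' (Fin.last (k+1)) * xs (Fin.last (k+1)))
        - (μy/2) * ∑ i, (y' i)^2
      ≤ ξ * ((∑ l : Fin (k+1), ys l.castSucc * (xs l.castSucc - xs l.succ))
          + ζ * ys (Fin.last (k+1)) * xs (Fin.last (k+1)))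
        - (μy/2) * ∑ i, (ys i)^2 := by
    intro y'
    rw [expandY y', expandY ys]
    have h1 : ∀ l : Fin (k+1),
        μy * ys l.castSucc * y' l.castSucc - (μy/2) * (y' l.castSucc)^2
        ≤ μy * ys l.castSucc * ys l.castSucc - (μy/2) * (ys l.castSucc)^2 := by
      intro l
      exact fSCSC_aux_concave μy (ys l.castSucc) (y' l.castSucc) hμy
    have h2 : μy * ys (Fin.last (k+1)) * y' (Fin.last (k+1))
          - (μy/2) * (y' (Fin.last (k+1)))^2
        ≤ μy * ys (Fin.last (k+1)) * ys (Fin.last (k+1))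
          - (μy/2) * (ys (Fin.last (k+1)))^2 := by
      exact fSCSC_aux_concave μy (ys (Fin.last (k+1))) (y' (Fin.last (k+1))) hμy
    exact add_le_add (Finset.sum_le_sum (fun l _ => h1 l)) h2
  -- ## x-direction expansion and inequality
  have expandX : ∀ z : EuclideanSpace ℝ (Fin (k+2)),
      ξ * ((∑ l : Fin (k+1), ys l.castSucc * (z l.castSucc - z l.succ))
          + ζ * ys (Fin.last (k+1)) * z (Fin.last (k+1)))
        + (μx/2) * ∑ i, (z i)^2 - β * ξ * z (0 : Fin (k+2))
      = ((ξ * ys (0 : Fin (k+2)) - β * ξ) * z (0 : Fin (k+2))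
          + (μx/2) * (z (0 : Fin (k+2)))^2)
        + (∑ j : Fin k, ((ξ * (ys (j.succ.castSucc) - ys (j.castSucc.castSucc))) * z (j.succ.castSucc)
            + (μx/2) * (z (j.succ.castSucc))^2))
        + ((ξ * (ζ * ys (Fin.last (k+1)) - ys ((Fin.last k).castSucc))) * z (Fin.last (k+1))
            + (μx/2) * (z (Fin.last (k+1)))^2) := by
    intro z
    have e1 : ∑ l : Fin (k+1), ys l.castSucc * (z l.castSucc - z l.succ)
        = ∑ l : Fin (k+1), ys l.castSucc * z l.castSucc
          - ∑ l : Fin (k+1), ys l.castSucc * z l.succ := by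
      rw [← Finset.sum_sub_distrib]
      exact Finset.sum_congr rfl (fun l _ => by ring)
    rw [e1]
    rw [Fin.sum_univ_succ (f := fun l : Fin (k+1) => ys l.castSucc * z l.castSucc)]
    rw [Fin.sum_univ_castSucc (f := fun l : Fin (k+1) => ys l.castSucc * z l.succ)]
    rw [Fin.sum_univ_succ (f := fun i : Fin (k+2) => (z i)^2)]
    rw [Fin.sum_univ_castSucc (f := fun l : Fin (k+1) => (z l.succ)^2)]
    simp only [Fin.succ_castSucc, Fin.succ_last, Fin.castSucc_zero, Nat.succ_eq_add_one]
    have r1 : ∑ j : Fin k, ((ξ * (ys (j.succ.castSucc) - ys (j.castSucc.castSucc))) * z (j.succ.castSucc)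
            + (μx/2) * (z (j.succ.castSucc))^2)
        = ξ * (∑ j : Fin k, ys j.succ.castSucc * z j.succ.castSucc)
          - ξ * (∑ j : Fin k, ys j.castSucc.castSucc * z j.succ.castSucc)
          + (μx/2) * ∑ j : Fin k, (z j.succ.castSucc)^2 := by
      rw [Finset.mul_sum, Finset.mul_sum, Finset.mul_sum, ← Finset.sum_sub_distrib,
        ← Finset.sum_add_distrib]
      exact Finset.sum_congr rfl (fun j _ => by ring)
    rw [r1]
    ring
  have partX : ∀ x' : EuclideanSpace ℝ (Fin (k+2)),
      ξ * ((∑ l : Fin (k+1), ys l.castSucc * (xs l.castSucc - xs l.succ))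
          + ζ * ys (Fin.last (k+1)) * xs (Fin.last (k+1)))
        + (μx/2) * ∑ i, (xs i)^2 - β * ξ * xs (0 : Fin (k+2))
      ≤ ξ * ((∑ l : Fin (k+1), ys l.castSucc * (x' l.castSucc - x' l.succ))
          + ζ * ys (Fin.last (k+1)) * x' (Fin.last (k+1)))
        + (μx/2) * ∑ i, (x' i)^2 - β * ξ * x' (0 : Fin (k+2)) := by
    intro x'
    rw [expandX x', expandX xs]
    have c0 : ξ * ys (0 : Fin (k+2)) - β * ξ = -(μx * xs (0 : Fin (k+2))) := by
      linear_combination ClaimX0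
    have clast : ξ * (ζ * ys (Fin.last (k+1)) - ys ((Fin.last k).castSucc))
        = -(μx * xs (Fin.last (k+1))) := by linear_combination ClaimXlast
    rw [c0, clast]
    have t0 : -(μx * xs (0 : Fin (k+2))) * xs (0 : Fin (k+2)) + (μx/2) * (xs (0 : Fin (k+2)))^2
        ≤ -(μx * xs (0 : Fin (k+2))) * x' (0 : Fin (k+2)) + (μx/2) * (x' (0 : Fin (k+2)))^2 := by
      exact fSCSC_aux_convex μx (xs (0 : Fin (k+2))) (x' (0 : Fin (k+2))) hμx
    have tmid : ∀ j : Fin k,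
        (ξ * (ys (j.succ.castSucc) - ys (j.castSucc.castSucc))) * xs (j.succ.castSucc)
            + (μx/2) * (xs (j.succ.castSucc))^2
        ≤ (ξ * (ys (j.succ.castSucc) - ys (j.castSucc.castSucc))) * x' (j.succ.castSucc)
            + (μx/2) * (x' (j.succ.castSucc))^2 := by
      intro j
      have cj : ξ * (ys (j.succ.castSucc) - ys (j.castSucc.castSucc))
          = -(μx * xs (j.succ.castSucc)) := by linear_combination ClaimXint j
      rw [cj]
      exact fSCSC_aux_convex μx (xs (j.succ.castSucc)) (x' (j.succ.castSucc)) hμx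
    have tlast : -(μx * xs (Fin.last (k+1))) * xs (Fin.last (k+1)) + (μx/2) * (xs (Fin.last (k+1)))^2
        ≤ -(μx * xs (Fin.last (k+1))) * x' (Fin.last (k+1)) + (μx/2) * (x' (Fin.last (k+1)))^2 := by
      exact fSCSC_aux_convex μx (xs (Fin.last (k+1))) (x' (Fin.last (k+1))) hμx
    exact add_le_add (add_le_add t0 (Finset.sum_le_sum (fun j _ => tmid j))) tlast
  -- ## norm bounds
  have hE : c^2*((1-q)^2*((α^2-1)*((n:ℝ)^2*(μx*μy)))) = 4*((n:ℝ)^2*(β^2*μy^2)) := by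
    linear_combination (c*((1-q)*S) + 2*(n:ℝ)*β*μy) * hcS + (-(c^2*(1-q)^2)) * hS2'
  have Iq : 16*α*q^2 = (1-q^2)*(1-q)^2*(α^2-1)^2 := by
    rw [hq]; field_simp; ring
  have hkxid : (kx^2 - 2)*μx = (α^2-1)*((n:ℝ)^2*μy) := by
    have h1 : (kx^2-2)*μx^2 = L^2 - 2*μx^2 := by rw [hkx]; field_simp
    apply mul_right_cancel₀ hμx.ne'
    linear_combination h1 - hKey
  have hβ1 : β ≤ 2 * n * Rx * Real.sqrt (α / (kx ^ 2 - 2)) := hβ ▸ min_le_left _ _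
  have hβ1sq : β^2 * (kx^2 - 2) ≤ 4*(n:ℝ)^2*Rx^2*α := by
    have hB1 : (2*(n:ℝ)*Rx*Real.sqrt (α/(kx^2-2)))^2 = 4*(n:ℝ)^2*Rx^2*(α/(kx^2-2)) := by
      rw [mul_pow, Real.sq_sqrt (by positivity)]; ring
    calc β^2 * (kx^2-2) ≤ (2*(n:ℝ)*Rx*Real.sqrt (α/(kx^2-2)))^2 * (kx^2-2) := by
          exact mul_le_mul_of_nonneg_right (pow_le_pow_left₀ hβpos.le hβ1 2) hkx2'.le
    _ = 4*(n:ℝ)^2*Rx^2*α := by rw [hB1]; field_simp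
  have hXmain : c^2*q^2 ≤ Rx^2*(1-q^2) := by
    have hDpos : (0:ℝ) < (1-q)^2*((α^2-1)*((n:ℝ)^2*(μx*μy)))*(4*(n:ℝ)^2*α) := by positivity
    apply le_of_mul_le_mul_right _ hDpos
    calc c^2*q^2*((1-q)^2*((α^2-1)*((n:ℝ)^2*(μx*μy)))*(4*(n:ℝ)^2*α))
        = (n:ℝ)^4*β^2*μy^2*((1-q^2)*(1-q)^2*(α^2-1)^2) := by
          linear_combination (4*(n:ℝ)^2*α*q^2) * hE + ((n:ℝ)^4*β^2*μy^2) * Iq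
      _ = (β^2*(kx^2-2)) * (μx*((1-q^2)*(1-q)^2*((α^2-1)*((n:ℝ)^2*μy)))) := by
          linear_combination (-(β^2*(1-q^2)*(1-q)^2*((α^2-1)*((n:ℝ)^2*μy)))) * hkxid
      _ ≤ (4*(n:ℝ)^2*Rx^2*α) * (μx*((1-q^2)*(1-q)^2*((α^2-1)*((n:ℝ)^2*μy)))) := by
          exact mul_le_mul_of_nonneg_right hβ1sq (by positivity)
      _ = Rx^2*(1-q^2)*((1-q)^2*((α^2-1)*((n:ℝ)^2*(μx*μy)))*(4*(n:ℝ)^2*α)) := by ring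
  have hsum_xs : ∑ i, (xs i)^2 = c^2 * ∑ i : Fin (k+2), (q^2)^((i:ℕ)+1) := by
    rw [Finset.mul_sum]
    exact Finset.sum_congr rfl (fun i _ => by rw [hxs' i]; ring)
  have hTX1 : ∑ i : Fin (k+2), (q^2)^((i:ℕ)+1)
      = q^2 * ∑ i ∈ Finset.range (k+2), (q^2)^i := by
    rw [Fin.sum_univ_eq_sum_range (fun i => (q^2)^(i+1)) (k+2), Finset.mul_sum]
    exact Finset.sum_congr rfl (fun i _ => by ring)
  have hTX2 : (∑ i : Fin (k+2), (q^2)^((i:ℕ)+1)) * (1-q^2) = q^2*(1-(q^2)^(k+2)) := by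
    rw [hTX1]
    linear_combination (-q^2) * geom_sum_mul (q^2) (k+2)
  have hxsRx : ∑ i, (xs i)^2 ≤ Rx^2 := by
    apply le_of_mul_le_mul_right _ h1q2
    rw [hsum_xs]
    calc c^2 * (∑ i : Fin (k+2), (q^2)^((i:ℕ)+1)) * (1-q^2)
        = c^2 * (q^2*(1-(q^2)^(k+2))) := by rw [mul_assoc, hTX2]
      _ ≤ c^2*q^2 := by
          have hX : (0:ℝ) ≤ c^2*q^2*(q^2)^(k+2) := by positivity
          have e : c^2*(q^2*(1-(q^2)^(k+2))) = c^2*q^2 - c^2*q^2*(q^2)^(k+2) := by ring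
          linarith only [hX, e.le, e.ge]
      _ ≤ Rx^2*(1-q^2) := hXmain
  have h1qa : (1-q)*(α+1) = 2 := by linear_combination (-1 : ℝ) * hqα
  have hwq : w^2*(1-q) = 1 := by rw [hw2]; linear_combination (1/2)*h1qa
  have hq2α : q^2*(α+1)^2 = (α-1)^2 := by linear_combination (q*(α+1)+(α-1))*hqα
  have harm3 : β ≤ Real.sqrt (2*α) * Ry / (α-1) :=
    hβ ▸ le_trans (min_le_right _ _) (min_le_right _ _)
  have harm3sq : β^2*(α-1)^2 ≤ 2*α*Ry^2 := by
    have h1 : β*(α-1) ≤ Real.sqrt (2*α) * Ry := by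
      rw [← le_div_iff₀ hα1']; exact harm3
    have h2 : (β*(α-1))^2 ≤ (Real.sqrt (2*α) * Ry)^2 :=
      pow_le_pow_left₀ (by positivity) h1 2
    rw [mul_pow, mul_pow, Real.sq_sqrt (by positivity)] at h2
    linarith only [h2, sq_nonneg (β*(α-1))]
  have G3 : β^2*q^2 ≤ Ry^2*(1-q) := by
    have hpos : (0:ℝ) < (α+1)^2 := by positivity
    apply le_of_mul_le_mul_right _ hpos
    calc β^2*q^2*(α+1)^2 = β^2*(α-1)^2 := by linear_combination β^2 * hq2α
      _ ≤ 2*α*Ry^2 := harm3sq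
      _ ≤ 2*(α+1)*Ry^2 :=
          mul_le_mul_of_nonneg_right (by linarith only [] : 2*α ≤ 2*(α+1)) (sq_nonneg Ry)
      _ = Ry^2*(1-q)*(α+1)^2 := by
          have e : (1-q)*(α+1)^2 = 2*(α+1) := by linear_combination (α+1)*h1qa
          linear_combination (-(Ry^2)) * e
  have hsum_ys : ∑ i, (ys i)^2
      = β^2 * (∑ l : Fin (k+1), (q^2)^((l:ℕ)+1)) + β^2*w^2*(q^2)^(k+2) := by
    rw [Fin.sum_univ_castSucc (f := fun i : Fin (k+2) => (ys i)^2), hysm']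
    rw [Finset.mul_sum]
    congr 1
    · exact Finset.sum_congr rfl (fun l _ => by rw [hysc l]; ring)
    · ring
  have hTY1 : ∑ l : Fin (k+1), (q^2)^((l:ℕ)+1)
      = q^2 * ∑ i ∈ Finset.range (k+1), (q^2)^i := by
    rw [Fin.sum_univ_eq_sum_range (fun i => (q^2)^(i+1)) (k+1), Finset.mul_sum]
    exact Finset.sum_congr rfl (fun i _ => by ring)
  have hTY2 : (∑ l : Fin (k+1), (q^2)^((l:ℕ)+1)) * (1-q^2) = q^2*(1-(q^2)^(k+1)) := by
    rw [hTY1]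
    linear_combination (-q^2) * geom_sum_mul (q^2) (k+1)
  have hTYnn : 0 ≤ ∑ l : Fin (k+1), (q^2)^((l:ℕ)+1) :=
    Finset.sum_nonneg (fun l _ => pow_nonneg (sq_nonneg q) _)
  have hTYq : (∑ l : Fin (k+1), (q^2)^((l:ℕ)+1)) * (1-q) ≤ q^2 - (q^2)^(k+2) := by
    calc (∑ l : Fin (k+1), (q^2)^((l:ℕ)+1)) * (1-q)
        ≤ (∑ l : Fin (k+1), (q^2)^((l:ℕ)+1)) * (1-q^2) := by
          apply mul_le_mul_of_nonneg_left _ hTYnn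
          have h := mul_le_mul_of_nonneg_left hq1.le hq0.le
          linarith only [h, hq0, hq1]
      _ = q^2*(1-(q^2)^(k+1)) := hTY2
      _ = q^2 - (q^2)^(k+2) := by ring
  have hysRy : ∑ i, (ys i)^2 ≤ Ry^2 := by
    apply le_of_mul_le_mul_right _ h1q
    rw [hsum_ys]
    calc (β^2 * (∑ l : Fin (k+1), (q^2)^((l:ℕ)+1)) + β^2*w^2*(q^2)^(k+2)) * (1-q)
        = β^2 * ((∑ l : Fin (k+1), (q^2)^((l:ℕ)+1)) * (1-q))
          + β^2*(q^2)^(k+2)*(w^2*(1-q)) := by ring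
      _ ≤ β^2 * (q^2 - (q^2)^(k+2)) + β^2*(q^2)^(k+2)*1 := by
          rw [hwq]
          have := mul_le_mul_of_nonneg_left hTYq (sq_nonneg β)
          linarith only [this]
      _ = β^2*q^2 := by ring
      _ ≤ Ry^2*(1-q) := G3
  -- ## conclusion
  refine ⟨?_, ?_, ?_, ?_⟩
  · intro y'
    rw [hf' xs y', hf' xs ys]
    linarith only [partY y']
  · intro x'
    rw [hf' xs ys, hf' x' ys]
    linarith only [partX x']
  · exact le_of_pow_le_pow_left₀ two_ne_zero hRx.le ((hnormsq xs) ▸ hxsRx)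
  · exact le_of_pow_le_pow_left₀ two_ne_zero hRy.le ((hnormsq ys) ▸ hysRy)
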